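/- For every CNF formula F with n variables and m non-tautological clauses and every integer s ≥ 1: RREF(F,s) is satisfiable if and only if F has a Resolution refutation of length at most s. -/

import Mathlib

/-! ## Clauses, CNFs and Resolution -/

/-- A clause over variables of type `α`: a finite set of literals `(x, b)`,
where `(x, true)` is the positive literal `X` and `(x, false)` is `¬X`. -/
abbrev Clause (α : Type) := Finset (α × Bool)

/-- A clause is non-tautological if it contains no variable together with its negation. -/
def Clause.Nontaut {α : Type} (C : Clause α) : Prop :=
  ∀ x : α, ¬((x, true) ∈ C ∧ (x, false) ∈ C)

/-- A Resolution refutation of the set of clauses `F`: a nonempty sequence of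
non-tautological clauses, each of which is a weakening (i.e. a superset) of a clause
of `F`, or a weakening of a resolvent `(D_v ∖ {X}) ∪ (D_w ∖ {¬X})` of two earlier
clauses `D_v, D_w` with `X ∈ D_v` and `¬X ∈ D_w`; the last clause is empty.
The length of the refutation is the length of the list. -/
def IsResRefutation {α : Type} [DecidableEq α] (F : Set (Clause α)) (P : List (Clause α)) : Prop :=
  P ≠ [] ∧
  (∀ u : Fin P.length,
      Clause.Nontaut (P.get u) ∧
      ((∃ C ∈ F, C ⊆ P.get u) ∨
        ∃ v w : Fin P.length, (v : ℕ) < (u : ℕ) ∧ (w : ℕ) < (u : ℕ) ∧ ∃ x : α,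
          (x, true) ∈ P.get v ∧ (x, false) ∈ P.get w ∧
          ((P.get v).erase (x, true) ∪ (P.get w).erase (x, false)) ⊆ P.get u)) ∧
  P.getLast? = some (∅ : Clause α)

/-- Satisfiability of a set of clauses. -/
def CnfSat {α : Type} (S : Set (Clause α)) : Prop :=
  ∃ a : α → Bool, ∀ C ∈ S, ∃ l ∈ C, a l.1 = l.2

/-- The size of a CNF: the sum of the sizes (numbers of literals) of its clauses. -/
noncomputable def cnfSize {α : Type} (S : Set (Clause α)) : ℕ :=
  ∑ᶠ C ∈ S, Finset.card C

/-! ## Restrictions (partial assignments) -/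

/-- The restriction (partial assignment) `ρ` satisfies the clause `C` (i.e. `C↾ρ = 1`). -/
def Clause.SatByR {α : Type} (ρ : α → Option Bool) (C : Clause α) : Prop :=
  ∃ l ∈ C, ρ l.1 = some l.2

/-- The restriction `ρ` falsifies the clause `C` (i.e. `C↾ρ = 0`). -/
def Clause.FalsByR {α : Type} (ρ : α → Option Bool) (C : Clause α) : Prop :=
  ∀ l ∈ C, ρ l.1 = some (!l.2)

/-- The clause `C↾ρ` (relevant when `C` is neither satisfied nor falsified):
remove from `C` all falsified literals. -/
def Clause.restrictBy {α : Type} [DecidableEq α] (ρ : α → Option Bool) (C : Clause α) :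
    Clause α :=
  C.filter (fun l => ρ l.1 ≠ some (!l.2))

/-- `F↾ρ` for a set of clauses `F`: it contains `C↾ρ` for those `C ∈ F` neither satisfied
nor falsified by `ρ`, together with the empty clause if some `C ∈ F` is falsified by `ρ`. -/
def cnfRestrict {α : Type} [DecidableEq α] (ρ : α → Option Bool) (S : Set (Clause α)) :
    Set (Clause α) :=
  { E | ∃ C ∈ S, ¬Clause.SatByR ρ C ∧ ¬Clause.FalsByR ρ C ∧ E = Clause.restrictBy ρ C } ∪
  { E | E = (∅ : Clause α) ∧ ∃ C ∈ S, Clause.FalsByR ρ C }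

open scoped Classical in
/-- `Π↾ρ` for a sequence of clauses: remove the satisfied clauses (the `1`s) and replace
the falsified ones (the `0`s) by the empty clause. -/
noncomputable def seqRestrict {α : Type} [DecidableEq α] (ρ : α → Option Bool)
    (P : List (Clause α)) : List (Clause α) :=
  (P.filter (fun C => decide (¬Clause.SatByR ρ C))).map
    (fun C => if Clause.FalsByR ρ C then (∅ : Clause α) else Clause.restrictBy ρ C)

/-- The partial assignment `σ` extends the partial assignment `ρ`. -/
def optExtends {α : Type} (ρ σ : α → Option Bool) : Prop :=
  ∀ x b, ρ x = some b → σ x = some b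

/-! ## CNFs with an explicit enumeration of clauses -/

/-- A CNF formula with variables `X_1, …, X_n` (indices in `Finset.Icc 1 n`) given with an
explicit enumeration `Cl 1, …, Cl m` of its clauses. -/
structure CNFFam where
  n : ℕ
  m : ℕ
  Cl : ℕ → Clause ℕ

namespace CNFFam

/-- Well-formedness: the clauses `C_1, …, C_m` are non-tautological, pairwise distinct
(they enumerate a set of clauses), and use only the variables `X_1, …, X_n`. -/
def WF (F : CNFFam) : Prop :=
  (∀ j ∈ Finset.Icc 1 F.m, Clause.Nontaut (F.Cl j) ∧ ∀ l ∈ F.Cl j, l.1 ∈ Finset.Icc 1 F.n) ∧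
  (∀ j ∈ Finset.Icc 1 F.m, ∀ j' ∈ Finset.Icc 1 F.m, F.Cl j = F.Cl j' → j = j')

/-- The underlying set of clauses. -/
def clauseSet (F : CNFFam) : Set (Clause ℕ) :=
  { C | ∃ j ∈ Finset.Icc 1 F.m, C = F.Cl j }

/-- `F` is satisfiable. -/
def Sat (F : CNFFam) : Prop := CnfSat F.clauseSet

/-- `F` is a 3-CNF: all clauses have size at most 3. -/
def Is3CNF (F : CNFFam) : Prop := ∀ j ∈ Finset.Icc 1 F.m, (F.Cl j).card ≤ 3

end CNFFam

/-! ## The variables of the formulas REF and RREF -/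

/-- The propositional variables of `REF(F,s)` and `RREF(F,s)`. -/
inductive RefVar : Type where
  | D (u i : ℕ) (b : Bool)
  | V (u i : ℕ)
  | I (u j : ℕ)
  | L (u v : ℕ)
  | R (u v : ℕ)
  | P (u : ℕ)
deriving DecidableEq

abbrev VClause := Clause RefVar

/-- The index mentioned by a variable: `D[u,i,b], V[u,i], I[u,j], L[u,v], R[u,v], P[u]`
all mention the index `u`. -/
def RefVar.idx : RefVar → ℕ
  | .D u _ _ => u
  | .V u _ => u
  | .I u _ => u
  | .L u _ => u
  | .R u _ => u
  | .P u => u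

/-- The positive literal on a variable. -/
def pLit (x : RefVar) : RefVar × Bool := (x, true)

/-- The negative literal on a variable. -/
def nLit (x : RefVar) : RefVar × Bool := (x, false)

/-- The index-width of a clause: the number of indices mentioned by its variables. -/
def idxWidth (C : VClause) : ℕ := (C.image (fun l => RefVar.idx l.1)).card

/-! ## The clauses of REF and RREF -/

namespace Ref

/-- (A1) `V[u,0] ∨ V[u,1] ∨ ⋯ ∨ V[u,n]`. -/
def A1 (F : CNFFam) (A : Finset ℕ) : Set VClause :=
  { C | ∃ u ∈ A, C = (Finset.range (F.n + 1)).image (fun i => pLit (.V u i)) }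

/-- (A2) `I[u,0] ∨ I[u,1] ∨ ⋯ ∨ I[u,m]`. -/
def A2 (F : CNFFam) (A : Finset ℕ) : Set VClause :=
  { C | ∃ u ∈ A, C = (Finset.range (F.m + 1)).image (fun j => pLit (.I u j)) }

/-- (A3) `L[u,0] ∨ L[u,1] ∨ ⋯ ∨ L[u,s]` (disjunction over the index set and 0). -/
def A3 (A : Finset ℕ) : Set VClause :=
  { C | ∃ u ∈ A, C = (insert 0 A).image (fun v => pLit (.L u v)) }

/-- (A4) `R[u,0] ∨ R[u,1] ∨ ⋯ ∨ R[u,s]`. -/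
def A4 (A : Finset ℕ) : Set VClause :=
  { C | ∃ u ∈ A, C = (insert 0 A).image (fun v => pLit (.R u v)) }

/-- (A5) `¬V[u,i] ∨ ¬V[u,i']`, `i ≠ i'`. -/
def A5 (F : CNFFam) (A : Finset ℕ) : Set VClause :=
  { C | ∃ u ∈ A, ∃ i ∈ Finset.range (F.n + 1), ∃ i' ∈ Finset.range (F.n + 1),
      i ≠ i' ∧ C = {nLit (.V u i), nLit (.V u i')} }

/-- (A6) `¬I[u,j] ∨ ¬I[u,j']`, `j ≠ j'`. -/
def A6 (F : CNFFam) (A : Finset ℕ) : Set VClause :=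
  { C | ∃ u ∈ A, ∃ j ∈ Finset.range (F.m + 1), ∃ j' ∈ Finset.range (F.m + 1),
      j ≠ j' ∧ C = {nLit (.I u j), nLit (.I u j')} }

/-- (A7) `¬L[u,v] ∨ ¬L[u,v']`, `v ≠ v'`. -/
def A7 (A : Finset ℕ) : Set VClause :=
  { C | ∃ u ∈ A, ∃ v ∈ insert 0 A, ∃ v' ∈ insert 0 A,
      v ≠ v' ∧ C = {nLit (.L u v), nLit (.L u v')} }

/-- (A8) `¬R[u,v] ∨ ¬R[u,v']`, `v ≠ v'`. -/
def A8 (A : Finset ℕ) : Set VClause :=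
  { C | ∃ u ∈ A, ∃ v ∈ insert 0 A, ∃ v' ∈ insert 0 A,
      v ≠ v' ∧ C = {nLit (.R u v), nLit (.R u v')} }

/-- (A9) `¬I[u,0] ∨ ¬V[u,0]`. -/
def A9 (A : Finset ℕ) : Set VClause := { C | ∃ u ∈ A, C = {nLit (.I u 0), nLit (.V u 0)} }

/-- (A10) `I[u,0] ∨ V[u,0]`. -/
def A10 (A : Finset ℕ) : Set VClause := { C | ∃ u ∈ A, C = {pLit (.I u 0), pLit (.V u 0)} }

/-- (A11) `¬I[u,0] ∨ ¬L[u,0]`. -/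
def A11 (A : Finset ℕ) : Set VClause := { C | ∃ u ∈ A, C = {nLit (.I u 0), nLit (.L u 0)} }

/-- (A12) `¬I[u,0] ∨ ¬R[u,0]`. -/
def A12 (A : Finset ℕ) : Set VClause := { C | ∃ u ∈ A, C = {nLit (.I u 0), nLit (.R u 0)} }

/-- (A13) `¬L[u,v]` for `u ≤ v`. -/
def A13 (A : Finset ℕ) : Set VClause :=
  { C | ∃ u ∈ A, ∃ v ∈ A, u ≤ v ∧ C = {nLit (.L u v)} }

/-- (A14) `¬R[u,v]` for `u ≤ v`. -/
def A14 (A : Finset ℕ) : Set VClause :=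
  { C | ∃ u ∈ A, ∃ v ∈ A, u ≤ v ∧ C = {nLit (.R u v)} }

/-- (A15) `¬L[u,v] ∨ ¬V[u,i] ∨ D[v,i,0]`. -/
def A15 (F : CNFFam) (A : Finset ℕ) : Set VClause :=
  { C | ∃ u ∈ A, ∃ v ∈ A, ∃ i ∈ Finset.Icc 1 F.n,
      C = {nLit (.L u v), nLit (.V u i), pLit (.D v i false)} }

/-- (A16) `¬R[u,v] ∨ ¬V[u,i] ∨ D[v,i,1]`. -/
def A16 (F : CNFFam) (A : Finset ℕ) : Set VClause :=
  { C | ∃ u ∈ A, ∃ v ∈ A, ∃ i ∈ Finset.Icc 1 F.n,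
      C = {nLit (.R u v), nLit (.V u i), pLit (.D v i true)} }

/-- (A17) `¬L[u,v] ∨ ¬V[u,i] ∨ ¬D[v,i',b] ∨ D[u,i',b]`, `i' ≠ i`. -/
def A17 (F : CNFFam) (A : Finset ℕ) : Set VClause :=
  { C | ∃ u ∈ A, ∃ v ∈ A, ∃ i ∈ Finset.Icc 1 F.n, ∃ i' ∈ Finset.Icc 1 F.n, ∃ b : Bool,
      i' ≠ i ∧ C = {nLit (.L u v), nLit (.V u i), nLit (.D v i' b), pLit (.D u i' b)} }

/-- (A18) `¬R[u,v] ∨ ¬V[u,i] ∨ ¬D[v,i',b] ∨ D[u,i',b]`, `i' ≠ i`. -/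
def A18 (F : CNFFam) (A : Finset ℕ) : Set VClause :=
  { C | ∃ u ∈ A, ∃ v ∈ A, ∃ i ∈ Finset.Icc 1 F.n, ∃ i' ∈ Finset.Icc 1 F.n, ∃ b : Bool,
      i' ≠ i ∧ C = {nLit (.R u v), nLit (.V u i), nLit (.D v i' b), pLit (.D u i' b)} }

/-- (A19) `¬I[u,j] ∨ D[u,i,b]` for `X_i^{(b)} ∈ C_j`. -/
def A19 (F : CNFFam) (A : Finset ℕ) : Set VClause :=
  { C | ∃ u ∈ A, ∃ j ∈ Finset.Icc 1 F.m, ∃ i : ℕ, ∃ b : Bool,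
      (i, b) ∈ F.Cl j ∧ C = {nLit (.I u j), pLit (.D u i b)} }

/-- (A20) `¬D[u,i,0] ∨ ¬D[u,i,1]`. -/
def A20 (F : CNFFam) (A : Finset ℕ) : Set VClause :=
  { C | ∃ u ∈ A, ∃ i ∈ Finset.Icc 1 F.n, C = {nLit (.D u i false), nLit (.D u i true)} }

/-- (A21) `¬D[s,i,b]` (for the last index `t`). -/
def A21 (F : CNFFam) (t : ℕ) : Set VClause :=
  { C | ∃ i ∈ Finset.Icc 1 F.n, ∃ b : Bool, C = {nLit (.D t i b)} }

/-- (A22) `¬P[u] ∨ ¬L[u,v] ∨ P[v]`. -/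
def A22 (A : Finset ℕ) : Set VClause :=
  { C | ∃ u ∈ A, ∃ v ∈ A, C = {nLit (.P u), nLit (.L u v), pLit (.P v)} }

/-- (A23) `¬P[u] ∨ ¬R[u,v] ∨ P[v]`. -/
def A23 (A : Finset ℕ) : Set VClause :=
  { C | ∃ u ∈ A, ∃ v ∈ A, C = {nLit (.P u), nLit (.R u v), pLit (.P v)} }

/-- (A24) `P[s]` (for the last index `t`). -/
def A24 (t : ℕ) : Set VClause := { C | C = {pLit (.P t)} }

end Ref

/-- The formula `REF(F, A)` with index set `A` (in place of `[s]`) and last index `t`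
(in the role of `s`): the clauses (A1)–(A21). -/
def REFA (F : CNFFam) (A : Finset ℕ) (t : ℕ) : Set VClause :=
  Ref.A1 F A ∪ Ref.A2 F A ∪ Ref.A3 A ∪ Ref.A4 A ∪ Ref.A5 F A ∪ Ref.A6 F A ∪
    Ref.A7 A ∪ Ref.A8 A ∪ Ref.A9 A ∪ Ref.A10 A ∪ Ref.A11 A ∪ Ref.A12 A ∪ Ref.A13 A ∪
    Ref.A14 A ∪ Ref.A15 F A ∪ Ref.A16 F A ∪ Ref.A17 F A ∪ Ref.A18 F A ∪ Ref.A19 F A ∪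
    Ref.A20 F A ∪ Ref.A21 F t

/-- The formula `REF(F, s)`. -/
def REF (F : CNFFam) (s : ℕ) : Set VClause := REFA F (Finset.Icc 1 s) s

/-- Relativization of a clause: add the literal `¬P[u]` for every index `u` mentioned
by a variable occurring in the clause. -/
def relCl (C : VClause) : VClause :=
  C ∪ (C.image (fun l => RefVar.idx l.1)).image (fun u => nLit (.P u))

/-- The formula `RREF(F, s)`: the relativized clauses of `REF(F,s)` together with the
clauses (A22), (A23) and (A24). -/
def RREF (F : CNFFam) (s : ℕ) : Set VClause :=
  (relCl '' REF F s) ∪ Ref.A22 (Finset.Icc 1 s) ∪ Ref.A23 (Finset.Icc 1 s) ∪ Ref.A24 s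

/-- `REF(F,s)` with the clauses of types (A7) and (A8) deleted. -/
def REFnoLR (F : CNFFam) (s : ℕ) : Set VClause :=
  Ref.A1 F (Finset.Icc 1 s) ∪ Ref.A2 F (Finset.Icc 1 s) ∪ Ref.A3 (Finset.Icc 1 s) ∪
    Ref.A4 (Finset.Icc 1 s) ∪ Ref.A5 F (Finset.Icc 1 s) ∪ Ref.A6 F (Finset.Icc 1 s) ∪
    Ref.A9 (Finset.Icc 1 s) ∪ Ref.A10 (Finset.Icc 1 s) ∪ Ref.A11 (Finset.Icc 1 s) ∪
    Ref.A12 (Finset.Icc 1 s) ∪ Ref.A13 (Finset.Icc 1 s) ∪ Ref.A14 (Finset.Icc 1 s) ∪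
    Ref.A15 F (Finset.Icc 1 s) ∪ Ref.A16 F (Finset.Icc 1 s) ∪ Ref.A17 F (Finset.Icc 1 s) ∪
    Ref.A18 F (Finset.Icc 1 s) ∪ Ref.A19 F (Finset.Icc 1 s) ∪ Ref.A20 F (Finset.Icc 1 s) ∪
    Ref.A21 F s

/-- `RREF'(F,s)`: obtained from `RREF(F,s)` by deleting the (relativized) clauses of
types (A7) and (A8). -/
def RREF' (F : CNFFam) (s : ℕ) : Set VClause :=
  (relCl '' REFnoLR F s) ∪ Ref.A22 (Finset.Icc 1 s) ∪ Ref.A23 (Finset.Icc 1 s) ∪ Ref.A24 s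

/-! ## Refutations as structures -/

/-- A structure `(D, V, I, L, R)` of the type of a length-`s` refutation. -/
structure RefStruct where
  Dr : ℕ → ℕ → Bool → Bool
  Vf : ℕ → ℕ
  If' : ℕ → ℕ
  Lf : ℕ → ℕ
  Rf : ℕ → ℕ

namespace RefStruct

/-- The typing conditions: `D ⊆ [s]×[n]×B`, `V : [s] → [n]∪{0}`, `I : [s] → [m]∪{0}`,
`L, R : [s] → [s]∪{0}`. -/
def WFOn (M : RefStruct) (s n m : ℕ) : Prop :=
  (∀ u i b, M.Dr u i b = true → u ∈ Finset.Icc 1 s ∧ i ∈ Finset.Icc 1 n) ∧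
  (∀ u ∈ Finset.Icc 1 s, M.Vf u ≤ n) ∧
  (∀ u ∈ Finset.Icc 1 s, M.If' u ≤ m) ∧
  (∀ u ∈ Finset.Icc 1 s, M.Lf u ≤ s) ∧
  (∀ u ∈ Finset.Icc 1 s, M.Rf u ≤ s)

/-- (R1)–(R8): the structure is a refutation of `F` of length `s`. -/
def IsRefutationOf (M : RefStruct) (F : CNFFam) (s : ℕ) : Prop :=
  ∀ u ∈ Finset.Icc 1 s,
    ((M.Vf u = 0 ∨ M.If' u = 0) ∧ ¬(M.Vf u = 0 ∧ M.If' u = 0)) ∧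
    (M.If' u = 0 → M.Lf u ≠ 0 ∧ M.Rf u ≠ 0) ∧
    (M.Lf u < u ∧ M.Rf u < u) ∧
    (∀ i ∈ Finset.Icc 1 F.n, ∀ v ∈ Finset.Icc 1 s,
      (M.Vf u = i → M.Lf u = v → M.Dr v i false = true) ∧
      (M.Vf u = i → M.Rf u = v → M.Dr v i true = true) ∧
      (∀ i' ∈ Finset.Icc 1 F.n, ∀ b : Bool,
        M.Vf u = i → i ≠ i' → M.Lf u = v → M.Dr v i' b = true → M.Dr u i' b = true) ∧
      (∀ i' ∈ Finset.Icc 1 F.n, ∀ b : Bool,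
        M.Vf u = i → i ≠ i' → M.Rf u = v → M.Dr v i' b = true → M.Dr u i' b = true)) ∧
    (∀ j ∈ Finset.Icc 1 F.m, ∀ i : ℕ, ∀ b : Bool,
      M.If' u = j → (i, b) ∈ F.Cl j → M.Dr u i b = true) ∧
    (∀ i ∈ Finset.Icc 1 F.n, ¬(M.Dr u i false = true ∧ M.Dr u i true = true)) ∧
    (∀ i ∈ Finset.Icc 1 F.n, ∀ b : Bool, M.Dr s i b = false)

/-- The truth assignment associated to a structure. -/
def assign (M : RefStruct) : RefVar → Bool
  | .D u i b => M.Dr u i b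
  | .V u i => M.Vf u == i
  | .I u j => M.If' u == j
  | .L u v => M.Lf u == v
  | .R u v => M.Rf u == v
  | .P _ => true

end RefStruct

/-! ## The full-tree refutation -/

/-- The level `h` of the node numbered `u` in the full binary tree with `n+1` levels. -/
def levelOf (n u : ℕ) : ℕ := Nat.log 2 (2 ^ (n + 1) - u)

/-- The value (position within its level, `a₁` most significant) of the node numbered `u`. -/
def valOf (n u : ℕ) : ℕ := u - (2 ^ (n + 1) + 1 - 2 ^ (levelOf n u + 1))

/-- The `i`-th bit `a_i` of the binary string `a` labelling the node numbered `u`. -/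
def digitOf (n u i : ℕ) : Bool := (valOf n u).testBit (levelOf n u - i)

/-- The clause `C_a = X_1^{(a_1)} ∨ ⋯ ∨ X_n^{(a_n)}` labelling the leaf numbered `u`. -/
def leafClause (F : CNFFam) (u : ℕ) : Clause ℕ :=
  (Finset.Icc 1 F.n).image (fun i => (i, digitOf F.n u i))

/-- The full-tree Resolution refutation `(D*, V*, I*, L*, R*)` of `F`,
of length `s* = 2^{n+1} - 1`. -/
noncomputable def fullTree (F : CNFFam) : RefStruct where
  Dr := fun u i b =>
    decide (1 ≤ u ∧ u ≤ 2 ^ (F.n + 1) - 1 ∧ 1 ≤ i ∧ i ≤ levelOf F.n u) &&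
      (digitOf F.n u i == b)
  Vf := fun u =>
    if 1 ≤ u ∧ u ≤ 2 ^ (F.n + 1) - 1 ∧ levelOf F.n u < F.n then levelOf F.n u + 1 else 0
  If' := fun u =>
    if 1 ≤ u ∧ u ≤ 2 ^ (F.n + 1) - 1 ∧ levelOf F.n u = F.n then
      sInf { j : ℕ | j ∈ Finset.Icc 1 F.m ∧ F.Cl j ⊆ leafClause F u }
    else 0
  Lf := fun u =>
    if 1 ≤ u ∧ u ≤ 2 ^ (F.n + 1) - 1 ∧ levelOf F.n u < F.n then
      2 ^ (F.n + 1) + 1 + 2 * valOf F.n u - 2 ^ (levelOf F.n u + 2)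
    else 0
  Rf := fun u =>
    if 1 ≤ u ∧ u ≤ 2 ^ (F.n + 1) - 1 ∧ levelOf F.n u < F.n then
      2 ^ (F.n + 1) + 2 + 2 * valOf F.n u - 2 ^ (levelOf F.n u + 2)
    else 0

/-! ## Blocks, the family 𝓗, and conditions -/

/-- The integer `k` with `2^k < 3w ≤ 2^{k+1}`. -/
def kOf (w : ℕ) : ℕ := Nat.log 2 (3 * w - 1)

/-- The block `B*_i` of `[s*]`, `s* = 2^{n+1} - 1`. -/
def Bstar (n w i : ℕ) : Finset ℕ :=
  let s' := 2 ^ (n + 1) - 1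
  let k := kOf w
  if i = 0 then Finset.Icc (s' - 2 ^ (k + 1) + 2) s'
  else Finset.Icc (s' + 2 - 2 ^ (k + 1 + i)) (s' - 2 ^ (k + i) + 1)

/-- The block `B_i` of `[s]`. -/
def Bblk (n s w i : ℕ) : Finset ℕ :=
  let k := kOf w
  if i = 0 then Finset.Icc (s - 2 ^ (k + 1) + 2) s
  else if i = n - k then Finset.Icc 1 (s - 2 ^ (k + 1) * (n - k) + 1)
  else Finset.Icc (s - 2 ^ (k + 1) * (i + 1) + 2) (s - 2 ^ (k + 1) * i + 1)

/-- The bijection `t : B_0 → B*_0`, `t(u) = u - s + s*`. -/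
def tmap (n s u : ℕ) : ℕ := u + (2 ^ (n + 1) - 1 - s)

/-- `h` (a set of pairs) is a partial function. -/
def pfun (h : Finset (ℕ × ℕ)) : Prop :=
  ∀ p ∈ h, ∀ q ∈ h, p.1 = q.1 → p.2 = q.2

/-- The domain of a partial function given as a set of pairs. -/
def pdom (h : Finset (ℕ × ℕ)) : Finset ℕ := h.image Prod.fst

/-- The image of a partial function given as a set of pairs. -/
def pimg (h : Finset (ℕ × ℕ)) : Finset ℕ := h.image Prod.snd

/-- Membership in the family `𝓗`: injective partial functions
`h : [s]∪{0} → [s*]∪{0}` satisfying (H1)–(H4). -/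
def memH (n s w : ℕ) (h : Finset (ℕ × ℕ)) : Prop :=
  pfun h ∧
  (∀ p ∈ h, p.1 ∈ insert 0 (Finset.Icc 1 s) ∧
    p.2 ∈ insert 0 (Finset.Icc 1 (2 ^ (n + 1) - 1))) ∧
  (∀ p ∈ h, ∀ q ∈ h, p.2 = q.2 → p.1 = q.1) ∧
  ((0, 0) ∈ h) ∧
  (∀ p ∈ h, p.1 ∈ Bblk n s w 0 → p.2 = tmap n s p.1) ∧
  (∀ p ∈ h, ∀ i ∈ Finset.Icc 1 (n - kOf w), p.1 ∈ Bblk n s w i → p.2 ∈ Bstar n w i)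

/-- `∂I = {L*(u) | u ∈ I∖{0}} ∪ {R*(u) | u ∈ I∖{0}}`. -/
noncomputable def bnd (F : CNFFam) (I : Finset ℕ) : Finset ℕ :=
  (I.erase 0).image (fullTree F).Lf ∪ (I.erase 0).image (fullTree F).Rf

/-- A condition: a pair `p = (g, h)` of members of `𝓗` with (C1) `g ⊆ h` and
(C2) `Img(h) = Img(g) ∪ ∂Img(g)`. -/
def IsCond (F : CNFFam) (s w : ℕ) (g h : Finset (ℕ × ℕ)) : Prop :=
  memH F.n s w g ∧ memH F.n s w h ∧ g ⊆ h ∧ pimg h = pimg g ∪ bnd F (pimg g)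

/-- Application of a partial function given as a set of pairs. -/
noncomputable def papp (g : Finset (ℕ × ℕ)) (u : ℕ) : ℕ := sInf { v : ℕ | (u, v) ∈ g }

/-- Inverse application of an (injective) partial function given as a set of pairs. -/
noncomputable def pinv (h : Finset (ℕ × ℕ)) (y : ℕ) : ℕ := sInf { u : ℕ | (u, y) ∈ h }

/-- The partial assignment `α(p)` determined by a condition `p = (g, h)`: it is defined
precisely on the variables (of `REF(F,s)`) mentioning some `u ∈ Dom(g) ∖ {0}`, where it is
read off from the full-tree refutation through `g` (and `h` for the `L`- and `R`-variables). -/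
noncomputable def alphaP (F : CNFFam) (g h : Finset (ℕ × ℕ)) : RefVar → Option Bool :=
  fun x =>
    if RefVar.idx x ∈ (pdom g).erase 0 then
      match x with
      | RefVar.D u i b => some ((fullTree F).assign (RefVar.D (papp g u) i b))
      | RefVar.V u i => some ((fullTree F).assign (RefVar.V (papp g u) i))
      | RefVar.I u j => some ((fullTree F).assign (RefVar.I (papp g u) j))
      | RefVar.L u v => some (decide (v = pinv h ((fullTree F).Lf (papp g u))))
      | RefVar.R u v => some (decide (v = pinv h ((fullTree F).Rf (papp g u))))
      | RefVar.P _ => none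
    else none

open scoped Classical in
/-- The restriction `p↾I` of a condition `p = (g,h)`: `g'` is the restriction of `g` to
`I ∪ {0}` and `h'` is the restriction of `h` with image `Img(g') ∪ ∂Img(g')`. -/
noncomputable def condRestrict (F : CNFFam) (g h : Finset (ℕ × ℕ)) (I : Finset ℕ) :
    Finset (ℕ × ℕ) × Finset (ℕ × ℕ) :=
  let g' := g.filter (fun p => p.1 ∈ insert 0 I)
  let h' := h.filter (fun p => p.2 ∈ pimg g' ∪ bnd F (pimg g'))
  (g', h')

/-!
A satisfying assignment of `RREF(F,s)` is read as a refutation on the indices `u` with `P[u]`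
true: on those indices the clauses of `REF(F,s)` are in force, and (A22)–(A23) make the set of
these indices closed under taking premises, so the clauses `D_u` decoded from the variables
`D[u,i,b]`, listed in increasing order of `u`, form a Resolution refutation of length at most
`s`; it ends with `D_s = ∅` by (A24) and (A21).

Conversely, a refutation of length at most `s` is first restricted to the variables `X_1, …, X_n`
of `F` (a resolution step on another variable only weakens its premise), then padded to length
exactly `s` by repeating its first clause. Its structure `(D, V, I, L, R)`, with `P` true
everywhere, satisfies `RREF(F,s)`.
-/

open Finset

section Derivations

variable {α : Type} [DecidableEq α]

def IsWeakResolvent (X : Set α) (D₁ D₂ E : Clause α) : Prop :=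
  ∃ x ∈ X, (x, true) ∈ D₁ ∧ (x, false) ∈ D₂ ∧
    D₁.erase (x, true) ∪ D₂.erase (x, false) ⊆ E

def IsDerivation (F : Set (Clause α)) (X : Set α) (U : Finset ℕ) (D : ℕ → Clause α) :
    Prop :=
  ∀ u ∈ U, (D u).Nontaut ∧
    ((∃ C ∈ F, C ⊆ D u) ∨
      ∃ v ∈ U, ∃ w ∈ U, v < u ∧ w < u ∧ IsWeakResolvent X (D v) (D w) (D u))

variable {F : Set (Clause α)} {X : Set α}

theorem IsDerivation.isResRefutation_map_sort {U : Finset ℕ} {D : ℕ → Clause α}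
    (hD : IsDerivation F X U D) {t : ℕ} (ht : t ∈ U) (hmax : ∀ u ∈ U, u ≤ t)
    (hDt : D t = ∅) :
    IsResRefutation F (U.sort.map D) := by
  have hsorted := (Finset.sortedLT_sort U).strictMono_get
  have hmem : ∀ {u}, u ∈ U.sort ↔ u ∈ U := Finset.mem_sort _
  have hne : U.sort ≠ [] := List.ne_nil_of_mem (hmem.2 ht)
  refine ⟨by simpa using hne, fun p => ?_, ?_⟩
  · have hp : (p : ℕ) < U.sort.length := by simpa using p.2
    obtain ⟨hnt, hjust⟩ := hD _ (hmem.1 (List.getElem_mem hp))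
    simp only [List.get_eq_getElem, List.getElem_map]
    refine ⟨hnt, hjust.imp_right ?_⟩
    rintro ⟨v, hv, w, hw, hvu, hwu, x, -, hres⟩
    obtain ⟨qv, hqv, rfl⟩ := List.getElem_of_mem (hmem.2 hv)
    obtain ⟨qw, hqw, rfl⟩ := List.getElem_of_mem (hmem.2 hw)
    refine ⟨⟨qv, by simpa using hqv⟩, ⟨qw, by simpa using hqw⟩,
      hsorted.lt_iff_lt.1 (show U.sort.get ⟨qv, hqv⟩ < U.sort.get ⟨p, hp⟩ from hvu),
      hsorted.lt_iff_lt.1 (show U.sort.get ⟨qw, hqw⟩ < U.sort.get ⟨p, hp⟩ from hwu),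
      x, ?_⟩
    simpa using hres
  · have hlast : U.sort.getLast hne = t := by
      rw [List.getLast_eq_getElem, Finset.sorted_last_eq_max']
      exact le_antisymm (Finset.max'_le _ _ _ hmax) (Finset.le_max' _ _ ht)
    rw [List.getLast?_map, List.getLast?_eq_some_getLast hne, hlast, Option.map_some, hDt]

theorem IsResRefutation.isDerivation {P : List (Clause α)} (hP : IsResRefutation F P) :
    IsDerivation F Set.univ (range P.length) (P.getD · ∅) := by
  intro u hu
  have hu' : u < P.length := Finset.mem_range.1 hu
  obtain ⟨hnt, hjust⟩ := hP.2.1 ⟨u, hu'⟩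
  simp only [List.getD_eq_getElem _ _ hu']
  refine ⟨hnt, hjust.imp_right ?_⟩
  rintro ⟨v, w, hvu, hwu, x, hres⟩
  refine ⟨v, by simp, w, by simp, hvu, hwu, x, trivial, ?_⟩
  simpa [List.getD_eq_getElem] using hres

theorem IsResRefutation.getD_pred_length {P : List (Clause α)} (hP : IsResRefutation F P) :
    P.getD (P.length - 1) ∅ = ∅ := by
  have hlast := hP.2.2
  rw [List.getLast?_eq_getElem?] at hlast
  rw [List.getD_eq_getElem?_getD, hlast]
  rfl

theorem IsWeakResolvent.filter {D₁ D₂ E : Clause α} (Y : Finset α)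
    (h : IsWeakResolvent (Y : Set α) D₁ D₂ E) :
    IsWeakResolvent Y (D₁.filter (·.1 ∈ Y)) (D₂.filter (·.1 ∈ Y))
      (E.filter (·.1 ∈ Y)) := by
  obtain ⟨x, hxY, h₁, h₂, hE⟩ := h
  refine ⟨x, hxY, Finset.mem_filter.2 ⟨h₁, hxY⟩, Finset.mem_filter.2 ⟨h₂, hxY⟩, ?_⟩
  intro l hl
  simp only [Finset.mem_union, Finset.mem_erase, Finset.mem_filter] at hl ⊢
  refine ⟨hE ?_, by tauto⟩
  simp only [Finset.mem_union, Finset.mem_erase]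
  tauto

theorem IsDerivation.filter {U : Finset ℕ} {D : ℕ → Clause α} (hD : IsDerivation F X U D)
    (Y : Finset α) (hF : ∀ C ∈ F, ∀ l ∈ C, l.1 ∈ Y) :
    IsDerivation F Y U (fun u => (D u).filter (·.1 ∈ Y)) := by
  intro u
  induction u using Nat.strong_induction_on with
  | _ u ih =>
  intro hu
  obtain ⟨hnt, hjust⟩ := hD u hu
  refine ⟨fun x hx => hnt x ⟨(Finset.mem_filter.1 hx.1).1, (Finset.mem_filter.1 hx.2).1⟩,
    ?_⟩
  rcases hjust with ⟨C, hC, hCu⟩ | ⟨v, hv, w, hw, hvu, hwu, x, -, hres⟩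
  · exact Or.inl ⟨C, hC, fun l hl => Finset.mem_filter.2 ⟨hCu hl, hF C hC l hl⟩⟩
  by_cases hxY : x ∈ Y
  · exact Or.inr ⟨v, hv, w, hw, hvu, hwu, IsWeakResolvent.filter Y ⟨x, hxY, hres⟩⟩
  -- resolving on a variable outside `Y` does not touch the restriction of `D v`
  have hvu_sub : (D v).filter (·.1 ∈ Y) ⊆ (D u).filter (·.1 ∈ Y) := by
    intro l hl
    obtain ⟨hlv, hlY⟩ := Finset.mem_filter.1 hl
    refine Finset.mem_filter.2
      ⟨hres.2.2 (Finset.mem_union_left _ (Finset.mem_erase.2 ⟨?_, hlv⟩)), hlY⟩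
    rintro rfl
    exact hxY hlY
  rcases (ih v hvu hv).2 with ⟨C, hC, hCv⟩ | ⟨v', hv', w', hw', hv'v, hw'v, hres'⟩
  · exact Or.inl ⟨C, hC, hCv.trans hvu_sub⟩
  · obtain ⟨x', hx', h₁, h₂, hE⟩ := hres'
    exact Or.inr ⟨v', hv', w', hw', hv'v.trans hvu, hw'v.trans hvu, x', hx', h₁, h₂,
      hE.trans hvu_sub⟩

/-- Padding: thanks to truncated subtraction, all indices `u ≤ s + 1 - k` read the first clause
`D 0`, which is a weakening of an axiom. -/
theorem IsDerivation.shift {k : ℕ} {D : ℕ → Clause α} (hD : IsDerivation F X (range k) D)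
    {s : ℕ} (hk : 0 < k) (hks : k ≤ s) :
    IsDerivation F X (Icc 1 s) (fun u => D (u - (s + 1 - k))) := by
  intro u hu
  have hu' := Finset.mem_Icc.1 hu
  obtain ⟨hnt, hjust⟩ := hD (u - (s + 1 - k)) (Finset.mem_range.2 (by omega))
  refine ⟨hnt, hjust.imp_right ?_⟩
  rintro ⟨v, hv, w, hw, hvu, hwu, hres⟩
  refine ⟨v + (s + 1 - k), Finset.mem_Icc.2 ⟨by omega, by simp at hv; omega⟩,
    w + (s + 1 - k), Finset.mem_Icc.2 ⟨by omega, by simp at hw; omega⟩,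
    by omega, by omega, ?_⟩
  simpa only [Nat.add_sub_cancel] using hres

end Derivations

def IsModel {α : Type} (a : α → Bool) (S : Set (Clause α)) : Prop :=
  ∀ C ∈ S, ∃ l ∈ C, a l.1 = l.2

theorem RefStruct.isModel_assign_REF {M : RefStruct} {F : CNFFam} {s : ℕ}
    (hs : 1 ≤ s) (hWF : M.WFOn s F.n F.m) (hM : M.IsRefutationOf F s) :
    IsModel M.assign (REF F s) := by
  obtain ⟨-, hV, hI, hL, hR⟩ := hWF
  rintro C ((((((((((((((((((((
    ⟨u, hu, rfl⟩ | ⟨u, hu, rfl⟩) | ⟨u, hu, rfl⟩) | ⟨u, hu, rfl⟩) |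
    ⟨u, hu, i, -, i', -, hne, rfl⟩) | ⟨u, hu, i, -, i', -, hne, rfl⟩) |
    ⟨u, hu, i, -, i', -, hne, rfl⟩) | ⟨u, hu, i, -, i', -, hne, rfl⟩) |
    ⟨u, hu, rfl⟩) | ⟨u, hu, rfl⟩) | ⟨u, hu, rfl⟩) | ⟨u, hu, rfl⟩) |
    ⟨u, hu, v, hv, huv, rfl⟩) | ⟨u, hu, v, hv, huv, rfl⟩) |
    ⟨u, hu, v, hv, i, hi, rfl⟩) | ⟨u, hu, v, hv, i, hi, rfl⟩) |
    ⟨u, hu, v, hv, i, hi, i', hi', b, hne, rfl⟩) |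
    ⟨u, hu, v, hv, i, hi, i', hi', b, hne, rfl⟩) |
    ⟨u, hu, j, hj, i, b, hib, rfl⟩) | ⟨u, hu, i, hi, rfl⟩) | ⟨i, hi, b, rfl⟩)
  all_goals simp only [RefStruct.assign, pLit, nLit, Finset.exists_mem_insert,
    Finset.exists_mem_image, Finset.mem_singleton, exists_eq_left, beq_iff_eq, ne_eq,
    Bool.eq_false_iff]
  · exact ⟨M.Vf u, by simpa [Nat.lt_succ_iff] using hV u hu, rfl⟩
  · exact ⟨M.If' u, by simpa [Nat.lt_succ_iff] using hI u hu, rfl⟩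
  · exact (Nat.eq_zero_or_pos _).imp_right fun h => ⟨_, Finset.mem_Icc.2 ⟨h, hL u hu⟩, rfl⟩
  · exact (Nat.eq_zero_or_pos _).imp_right fun h => ⟨_, Finset.mem_Icc.2 ⟨h, hR u hu⟩, rfl⟩
  iterate 4 omega
  · have := (hM u hu).1; tauto
  · have := (hM u hu).1; tauto
  · have := (hM u hu).2.1; tauto
  · have := (hM u hu).2.1; tauto
  · have := (hM u hu).2.2.1; omega
  · have := (hM u hu).2.2.1; omega
  · have := ((hM u hu).2.2.2.1 i hi v hv).1; tauto
  · have := ((hM u hu).2.2.2.1 i hi v hv).2.1; tauto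
  · have := ((hM u hu).2.2.2.1 i hi v hv).2.2.1 i' hi' b; tauto
  · have := ((hM u hu).2.2.2.1 i hi v hv).2.2.2 i' hi' b; tauto
  · have := (hM u hu).2.2.2.2.1 j hj i b; tauto
  · have := (hM u hu).2.2.2.2.2.1 i hi; tauto
  · simpa using (hM s (Finset.mem_Icc.2 ⟨hs, le_rfl⟩)).2.2.2.2.2.2 i hi b

theorem isModel_RREF_of_isModel_REF {a : RefVar → Bool} {F : CNFFam} {s : ℕ}
    (ha : IsModel a (REF F s)) (hP : ∀ u, a (.P u) = true) : IsModel a (RREF F s) := by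
  rintro C (((⟨C₀, hC₀, rfl⟩ | ⟨u, -, v, -, rfl⟩) | ⟨u, -, v, -, rfl⟩) | rfl)
  · obtain ⟨l, hl, hal⟩ := ha C₀ hC₀
    exact ⟨l, Finset.mem_union_left _ hl, hal⟩
  · exact ⟨pLit (.P v), by simp, hP v⟩
  · exact ⟨pLit (.P v), by simp, hP v⟩
  · exact ⟨pLit (.P s), by simp, hP s⟩

theorem IsDerivation.exists_refStruct {F : CNFFam} {s : ℕ} {D : ℕ → Clause ℕ}
    (hD : IsDerivation F.clauseSet (Icc 1 F.n) (Icc 1 s) D) (hDs : D s = ∅)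
    (hF : ∀ j ∈ Icc 1 F.m, ∀ l ∈ F.Cl j, l.1 ∈ Icc 1 F.n) :
    ∃ M : RefStruct, M.WFOn s F.n F.m ∧ M.IsRefutationOf F s := by
  -- `j, x, v, w` become `I u, V u, L u, R u`
  have step : ∀ u, ∃ j x v w : ℕ, u ∈ Icc 1 s →
      (F.Cl j ⊆ D u ∧ 1 ≤ j ∧ j ≤ F.m ∧ x = 0 ∧ v = 0 ∧ w = 0) ∨
      ((x, false) ∈ D v ∧ (x, true) ∈ D w ∧
        (D w).erase (x, true) ∪ (D v).erase (x, false) ⊆ D u ∧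
        j = 0 ∧ 1 ≤ x ∧ x ≤ F.n ∧ 1 ≤ v ∧ 1 ≤ w ∧ v < u ∧ w < u) := by
    intro u
    by_cases hu : u ∈ Icc 1 s
    · rcases (hD u hu).2 with
        ⟨C, ⟨j, hj, rfl⟩, hsub⟩ | ⟨w, hw, v, hv, hwu, hvu, x, hx, hxw, hxv, hres⟩
      · rw [Finset.mem_Icc] at hj
        exact ⟨j, 0, 0, 0, fun _ => Or.inl ⟨hsub, hj.1, hj.2, rfl, rfl, rfl⟩⟩
      · rw [Finset.mem_coe, Finset.mem_Icc] at hx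
        rw [Finset.mem_Icc] at hv hw
        exact ⟨0, x, v, w, fun _ =>
          Or.inr ⟨hxv, hxw, hres, rfl, hx.1, hx.2, hv.1, hw.1, hvu, hwu⟩⟩
    · exact ⟨0, 0, 0, 0, fun h => absurd h hu⟩
  choose I V L R hstep using step
  refine ⟨⟨fun u i b => decide (u ∈ Icc 1 s ∧ i ∈ Icc 1 F.n ∧ (i, b) ∈ D u),
      V, I, L, R⟩,
    ⟨fun u i b h => ?_, fun u hu => ?_, fun u hu => ?_, fun u hu => ?_, fun u hu => ?_⟩,
    fun u hu => ⟨?_, ?_, ?_, ?_, ?_, fun i hi => ?_, fun i hi b => ?_⟩⟩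
  · simp only [decide_eq_true_eq] at h
    exact ⟨h.1, h.2.1⟩
  all_goals dsimp only
  -- the bounds of `WFOn` and the first three conditions of `IsRefutationOf` are arithmetic
  any_goals (have := Finset.mem_Icc.1 hu; rcases hstep u hu with h | h <;> omega)
  · intro i hi v hv
    simp only [decide_eq_true_eq]
    rcases hstep u hu with h | ⟨hxv, hxw, hres, -⟩
    · have : V u ≠ i := by rw [Finset.mem_Icc] at hi; omega
      tauto
    refine ⟨?_, ?_, ?_, ?_⟩
    · rintro rfl rfl
      exact ⟨hv, hi, hxv⟩
    · rintro rfl rfl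
      exact ⟨hv, hi, hxw⟩
    · rintro i' hi' b rfl hne rfl ⟨-, -, h⟩
      refine ⟨hu, hi', hres (Finset.mem_union_right _ (Finset.mem_erase.2 ⟨?_, h⟩))⟩
      exact fun h' => hne (congrArg Prod.fst h').symm
    · rintro i' hi' b rfl hne rfl ⟨-, -, h⟩
      refine ⟨hu, hi', hres (Finset.mem_union_left _ (Finset.mem_erase.2 ⟨?_, h⟩))⟩
      exact fun h' => hne (congrArg Prod.fst h').symm
  · rintro j hj i b rfl hib
    rcases hstep u hu with h | h
    · exact decide_eq_true ⟨hu, hF _ hj _ hib, h.1 hib⟩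
    · rw [Finset.mem_Icc] at hj
      omega
  · simp only [decide_eq_true_eq]
    exact fun h => (hD u hu).1 i ⟨h.2.2.2, h.1.2.2⟩
  · simp [hDs]

section Extraction

variable {F : CNFFam} {s : ℕ}

theorem Ref.A1_subset_REF : Ref.A1 F (Icc 1 s) ⊆ REF F s := fun _ _ => by
  simp only [REF, REFA, Set.mem_union]; tauto
theorem Ref.A2_subset_REF : Ref.A2 F (Icc 1 s) ⊆ REF F s := fun _ _ => by
  simp only [REF, REFA, Set.mem_union]; tauto
theorem Ref.A3_subset_REF : Ref.A3 (Icc 1 s) ⊆ REF F s := fun _ _ => by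
  simp only [REF, REFA, Set.mem_union]; tauto
theorem Ref.A4_subset_REF : Ref.A4 (Icc 1 s) ⊆ REF F s := fun _ _ => by
  simp only [REF, REFA, Set.mem_union]; tauto
theorem Ref.A9_subset_REF : Ref.A9 (Icc 1 s) ⊆ REF F s := fun _ _ => by
  simp only [REF, REFA, Set.mem_union]; tauto
theorem Ref.A11_subset_REF : Ref.A11 (Icc 1 s) ⊆ REF F s := fun _ _ => by
  simp only [REF, REFA, Set.mem_union]; tauto
theorem Ref.A12_subset_REF : Ref.A12 (Icc 1 s) ⊆ REF F s := fun _ _ => by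
  simp only [REF, REFA, Set.mem_union]; tauto
theorem Ref.A13_subset_REF : Ref.A13 (Icc 1 s) ⊆ REF F s := fun _ _ => by
  simp only [REF, REFA, Set.mem_union]; tauto
theorem Ref.A14_subset_REF : Ref.A14 (Icc 1 s) ⊆ REF F s := fun _ _ => by
  simp only [REF, REFA, Set.mem_union]; tauto
theorem Ref.A15_subset_REF : Ref.A15 F (Icc 1 s) ⊆ REF F s := fun _ _ => by
  simp only [REF, REFA, Set.mem_union]; tauto
theorem Ref.A16_subset_REF : Ref.A16 F (Icc 1 s) ⊆ REF F s := fun _ _ => by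
  simp only [REF, REFA, Set.mem_union]; tauto
theorem Ref.A17_subset_REF : Ref.A17 F (Icc 1 s) ⊆ REF F s := fun _ _ => by
  simp only [REF, REFA, Set.mem_union]; tauto
theorem Ref.A18_subset_REF : Ref.A18 F (Icc 1 s) ⊆ REF F s := fun _ _ => by
  simp only [REF, REFA, Set.mem_union]; tauto
theorem Ref.A19_subset_REF : Ref.A19 F (Icc 1 s) ⊆ REF F s := fun _ _ => by
  simp only [REF, REFA, Set.mem_union]; tauto
theorem Ref.A20_subset_REF : Ref.A20 F (Icc 1 s) ⊆ REF F s := fun _ _ => by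
  simp only [REF, REFA, Set.mem_union]; tauto
theorem Ref.A21_subset_REF : Ref.A21 F s ⊆ REF F s := fun _ _ => by
  simp only [REF, REFA, Set.mem_union]; tauto

variable {a : RefVar → Bool}

theorem IsModel.exists_lit_of_mem_REF (ha : IsModel a (RREF F s)) {C : VClause}
    (hC : C ∈ REF F s) (hP : ∀ l ∈ C, a (.P l.1.idx) = true) : ∃ l ∈ C, a l.1 = l.2 := by
  obtain ⟨l, hl, hal⟩ := ha _ (Or.inl (Or.inl (Or.inl ⟨C, hC, rfl⟩)))
  rcases Finset.mem_union.1 hl with hl | hl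
  · exact ⟨l, hl, hal⟩
  · simp only [Finset.mem_image] at hl
    obtain ⟨_, ⟨l', hl', rfl⟩, rfl⟩ := hl
    simp [nLit, hP l' hl'] at hal

theorem IsModel.P_last (ha : IsModel a (RREF F s)) : a (.P s) = true := by
  simpa [pLit] using ha _ (Or.inr rfl)

variable {u : ℕ}

theorem IsModel.P_of_L (ha : IsModel a (RREF F s)) (hu : u ∈ Icc 1 s) (hPu : a (.P u) = true)
    {v : ℕ} (hv : v ∈ Icc 1 s) (hL : a (.L u v) = true) : a (.P v) = true := by
  simpa [nLit, pLit, hPu, hL] using ha _ (Or.inl (Or.inl (Or.inr ⟨u, hu, v, hv, rfl⟩)))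

theorem IsModel.P_of_R (ha : IsModel a (RREF F s)) (hu : u ∈ Icc 1 s) (hPu : a (.P u) = true)
    {v : ℕ} (hv : v ∈ Icc 1 s) (hR : a (.R u v) = true) : a (.P v) = true := by
  simpa [nLit, pLit, hPu, hR] using ha _ (Or.inl (Or.inr ⟨u, hu, v, hv, rfl⟩))

def decodeClause (n : ℕ) (a : RefVar → Bool) (u : ℕ) : Clause ℕ :=
  (Icc 1 n ×ˢ Finset.univ).filter fun l => a (.D u l.1 l.2)

@[simp]
theorem mem_decodeClause {n i : ℕ} {b : Bool} :
    (i, b) ∈ decodeClause n a u ↔ i ∈ Icc 1 n ∧ a (.D u i b) = true := by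
  simp [decodeClause]

theorem IsModel.nontaut_decodeClause (ha : IsModel a (RREF F s)) (hu : u ∈ Icc 1 s)
    (hPu : a (.P u) = true) : (decodeClause F.n a u).Nontaut := by
  rintro i ⟨h₁, h₂⟩
  rw [mem_decodeClause] at h₁ h₂
  simpa [nLit, pLit, RefVar.idx, hPu, h₁.2, h₂.2] using
    ha.exists_lit_of_mem_REF (Ref.A20_subset_REF ⟨u, hu, i, h₁.1, rfl⟩)
      (by simp [nLit, RefVar.idx, hPu])

theorem IsModel.decodeClause_last (ha : IsModel a (RREF F s)) : decodeClause F.n a s = ∅ := by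
  refine Finset.eq_empty_of_forall_notMem fun ⟨i, b⟩ h => ?_
  rw [mem_decodeClause] at h
  simpa [nLit, h.2] using
    ha.exists_lit_of_mem_REF (Ref.A21_subset_REF ⟨i, h.1, b, rfl⟩)
      (by simp [nLit, RefVar.idx, ha.P_last])

theorem IsModel.exists_I (ha : IsModel a (RREF F s)) (hu : u ∈ Icc 1 s)
    (hPu : a (.P u) = true) : ∃ j ≤ F.m, a (.I u j) = true := by
  simpa [pLit, Nat.lt_succ_iff] using
    ha.exists_lit_of_mem_REF (Ref.A2_subset_REF ⟨u, hu, rfl⟩) (by simp [pLit, RefVar.idx, hPu])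

theorem IsModel.subset_decodeClause_of_I (ha : IsModel a (RREF F s))
    (hF : ∀ j ∈ Icc 1 F.m, ∀ l ∈ F.Cl j, l.1 ∈ Icc 1 F.n) (hu : u ∈ Icc 1 s)
    (hPu : a (.P u) = true) {j : ℕ} (hj : j ∈ Icc 1 F.m) (hI : a (.I u j) = true) :
    F.Cl j ⊆ decodeClause F.n a u := by
  rintro ⟨i, b⟩ hib
  refine mem_decodeClause.2 ⟨hF j hj _ hib, ?_⟩
  simpa [nLit, pLit, hI] using
    ha.exists_lit_of_mem_REF (Ref.A19_subset_REF ⟨u, hu, j, hj, i, b, hib, rfl⟩)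
    (by simp [nLit, pLit, RefVar.idx, hPu])

theorem IsModel.exists_V_of_I_zero (ha : IsModel a (RREF F s)) (hu : u ∈ Icc 1 s)
    (hPu : a (.P u) = true) (hI : a (.I u 0) = true) : ∃ x ∈ Icc 1 F.n, a (.V u x) = true := by
  obtain ⟨x, hx, hV⟩ : ∃ x ≤ F.n, a (.V u x) = true := by
    simpa [pLit, Nat.lt_succ_iff] using
      ha.exists_lit_of_mem_REF (Ref.A1_subset_REF ⟨u, hu, rfl⟩) (by simp [pLit, RefVar.idx, hPu])
  have hV0 : a (.V u 0) = false := by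
    simpa [nLit, hI] using
      ha.exists_lit_of_mem_REF (Ref.A9_subset_REF ⟨u, hu, rfl⟩) (by simp [nLit, RefVar.idx, hPu])
  refine ⟨x, Finset.mem_Icc.2 ⟨Nat.one_le_iff_ne_zero.2 ?_, hx⟩, hV⟩
  rintro rfl
  simp [hV] at hV0

theorem IsModel.exists_L_of_I_zero (ha : IsModel a (RREF F s)) (hu : u ∈ Icc 1 s)
    (hPu : a (.P u) = true) (hI : a (.I u 0) = true) :
    ∃ v ∈ Icc 1 s, v < u ∧ a (.L u v) = true := by
  obtain ⟨v, hv, hL⟩ : ∃ v ∈ insert 0 (Icc 1 s), a (.L u v) = true := by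
    simpa [pLit] using
      ha.exists_lit_of_mem_REF (Ref.A3_subset_REF ⟨u, hu, rfl⟩) fun _ hl => by
        obtain ⟨v, -, rfl⟩ := Finset.mem_image.1 hl
        exact hPu
  have hv0 : v ≠ 0 := by
    rintro rfl
    simpa [nLit, hI, hL] using
      ha.exists_lit_of_mem_REF (Ref.A11_subset_REF ⟨u, hu, rfl⟩) (by simp [nLit, RefVar.idx, hPu])
  have hv : v ∈ Icc 1 s := (Finset.mem_insert.1 hv).resolve_left hv0
  refine ⟨v, hv, lt_of_not_ge fun huv => ?_, hL⟩
  simpa [nLit, hL] using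
    ha.exists_lit_of_mem_REF (Ref.A13_subset_REF ⟨u, hu, v, hv, huv, rfl⟩)
      (by simp [nLit, RefVar.idx, hPu])

theorem IsModel.exists_R_of_I_zero (ha : IsModel a (RREF F s)) (hu : u ∈ Icc 1 s)
    (hPu : a (.P u) = true) (hI : a (.I u 0) = true) :
    ∃ v ∈ Icc 1 s, v < u ∧ a (.R u v) = true := by
  obtain ⟨v, hv, hR⟩ : ∃ v ∈ insert 0 (Icc 1 s), a (.R u v) = true := by
    simpa [pLit] using
      ha.exists_lit_of_mem_REF (Ref.A4_subset_REF ⟨u, hu, rfl⟩) fun _ hl => by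
        obtain ⟨v, -, rfl⟩ := Finset.mem_image.1 hl
        exact hPu
  have hv0 : v ≠ 0 := by
    rintro rfl
    simpa [nLit, hI, hR] using
      ha.exists_lit_of_mem_REF (Ref.A12_subset_REF ⟨u, hu, rfl⟩) (by simp [nLit, RefVar.idx, hPu])
  have hv : v ∈ Icc 1 s := (Finset.mem_insert.1 hv).resolve_left hv0
  refine ⟨v, hv, lt_of_not_ge fun huv => ?_, hR⟩
  simpa [nLit, hR] using
    ha.exists_lit_of_mem_REF (Ref.A14_subset_REF ⟨u, hu, v, hv, huv, rfl⟩)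
      (by simp [nLit, RefVar.idx, hPu])

theorem IsModel.premise_of_L (ha : IsModel a (RREF F s)) (hu : u ∈ Icc 1 s)
    (hPu : a (.P u) = true) {v x : ℕ} (hv : v ∈ Icc 1 s) (hL : a (.L u v) = true)
    (hx : x ∈ Icc 1 F.n) (hV : a (.V u x) = true) :
    (x, false) ∈ decodeClause F.n a v ∧
      (decodeClause F.n a v).erase (x, false) ⊆ decodeClause F.n a u := by
  have hPv := ha.P_of_L hu hPu hv hL
  have hxv : (x, false) ∈ decodeClause F.n a v := by
    refine mem_decodeClause.2 ⟨hx, ?_⟩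
    simpa [nLit, pLit, hL, hV] using
      ha.exists_lit_of_mem_REF (Ref.A15_subset_REF ⟨u, hu, v, hv, x, hx, rfl⟩)
      (by simp [nLit, pLit, RefVar.idx, hPu, hPv])
  refine ⟨hxv, fun ⟨i, b⟩ h => ?_⟩
  obtain ⟨hne, hi⟩ := Finset.mem_erase.1 h
  have hix : i ≠ x := by
    rintro rfl
    cases b
    · exact hne rfl
    · exact ha.nontaut_decodeClause hv hPv i ⟨hi, hxv⟩
  rw [mem_decodeClause] at hi ⊢
  refine ⟨hi.1, ?_⟩
  simpa [nLit, pLit, hL, hV, hi.2] using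
    ha.exists_lit_of_mem_REF (Ref.A17_subset_REF ⟨u, hu, v, hv, x, hx, i, hi.1, b, hix, rfl⟩)
      (by simp [nLit, pLit, RefVar.idx, hPu, hPv])

theorem IsModel.premise_of_R (ha : IsModel a (RREF F s)) (hu : u ∈ Icc 1 s)
    (hPu : a (.P u) = true) {v x : ℕ} (hv : v ∈ Icc 1 s) (hR : a (.R u v) = true)
    (hx : x ∈ Icc 1 F.n) (hV : a (.V u x) = true) :
    (x, true) ∈ decodeClause F.n a v ∧
      (decodeClause F.n a v).erase (x, true) ⊆ decodeClause F.n a u := by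
  have hPv := ha.P_of_R hu hPu hv hR
  have hxv : (x, true) ∈ decodeClause F.n a v := by
    refine mem_decodeClause.2 ⟨hx, ?_⟩
    simpa [nLit, pLit, hR, hV] using
      ha.exists_lit_of_mem_REF (Ref.A16_subset_REF ⟨u, hu, v, hv, x, hx, rfl⟩)
      (by simp [nLit, pLit, RefVar.idx, hPu, hPv])
  refine ⟨hxv, fun ⟨i, b⟩ h => ?_⟩
  obtain ⟨hne, hi⟩ := Finset.mem_erase.1 h
  have hix : i ≠ x := by
    rintro rfl
    cases b
    · exact ha.nontaut_decodeClause hv hPv i ⟨hxv, hi⟩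
    · exact hne rfl
  rw [mem_decodeClause] at hi ⊢
  refine ⟨hi.1, ?_⟩
  simpa [nLit, pLit, hR, hV, hi.2] using
    ha.exists_lit_of_mem_REF (Ref.A18_subset_REF ⟨u, hu, v, hv, x, hx, i, hi.1, b, hix, rfl⟩)
      (by simp [nLit, pLit, RefVar.idx, hPu, hPv])

theorem IsModel.isDerivation_decodeClause (ha : IsModel a (RREF F s))
    (hF : ∀ j ∈ Icc 1 F.m, ∀ l ∈ F.Cl j, l.1 ∈ Icc 1 F.n) :
    IsDerivation F.clauseSet Set.univ ((Icc 1 s).filter (a <| .P ·)) (decodeClause F.n a) := by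
  intro u hu'
  obtain ⟨hu, hPu⟩ := Finset.mem_filter.1 hu'
  refine ⟨ha.nontaut_decodeClause hu hPu, ?_⟩
  obtain ⟨j, hjm, hI⟩ := ha.exists_I hu hPu
  rcases Nat.eq_zero_or_pos j with rfl | hj
  · obtain ⟨x, hx, hV⟩ := ha.exists_V_of_I_zero hu hPu hI
    obtain ⟨v, hv, hvu, hL⟩ := ha.exists_L_of_I_zero hu hPu hI
    obtain ⟨w, hw, hwu, hR⟩ := ha.exists_R_of_I_zero hu hPu hI
    obtain ⟨hxv, hv_sub⟩ := ha.premise_of_L hu hPu hv hL hx hV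
    obtain ⟨hxw, hw_sub⟩ := ha.premise_of_R hu hPu hw hR hx hV
    exact Or.inr ⟨w, Finset.mem_filter.2 ⟨hw, ha.P_of_R hu hPu hw hR⟩,
      v, Finset.mem_filter.2 ⟨hv, ha.P_of_L hu hPu hv hL⟩, hwu, hvu,
      x, trivial, hxw, hxv, Finset.union_subset hw_sub hv_sub⟩
  · have hj' : j ∈ Icc 1 F.m := Finset.mem_Icc.2 ⟨hj, hjm⟩
    exact Or.inl ⟨F.Cl j, ⟨j, hj', rfl⟩, ha.subset_decodeClause_of_I hF hu hPu hj' hI⟩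

end Extraction

/-- For every CNF `F` with `n` variables and `m` non-tautological clauses and every
integer `s ≥ 1`: `RREF(F,s)` is satisfiable iff `F` has a Resolution refutation of
length at most `s`. -/
theorem RREF_sat_iff_short_refutation (F : CNFFam) (hWF : F.WF) (s : ℕ) (hs : 1 ≤ s) :
    CnfSat (RREF F s) ↔
      ∃ Prf : List (Clause ℕ), IsResRefutation F.clauseSet Prf ∧ Prf.length ≤ s := by
  have hF : ∀ j ∈ Icc 1 F.m, ∀ l ∈ F.Cl j, l.1 ∈ Icc 1 F.n := fun j hj => (hWF.1 j hj).2
  constructor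
  · rintro ⟨a, ha : IsModel a (RREF F s)⟩
    have hsU : s ∈ (Icc 1 s).filter (a <| .P ·) :=
      Finset.mem_filter.2 ⟨Finset.mem_Icc.2 ⟨hs, le_rfl⟩, ha.P_last⟩
    refine ⟨_, (ha.isDerivation_decodeClause hF).isResRefutation_map_sort hsU
      (fun u hu => (Finset.mem_Icc.1 (Finset.mem_filter.1 hu).1).2) ha.decodeClause_last, ?_⟩
    simpa using (Finset.card_filter_le _ _).trans (Nat.card_Icc 1 s).le
  · rintro ⟨P, hP, hlen⟩
    have hpos : 0 < P.length := List.length_pos_iff.2 hP.1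
    have hF' : ∀ C ∈ F.clauseSet, ∀ l ∈ C, l.1 ∈ Icc 1 F.n := by
      rintro _ ⟨j, hj, rfl⟩
      exact hF j hj
    have hD := (hP.isDerivation.filter (Icc 1 F.n) hF').shift hpos hlen
    have hDs : (P.getD (s - (s + 1 - P.length)) ∅).filter (·.1 ∈ Icc 1 F.n) = ∅ := by
      rw [show s - (s + 1 - P.length) = P.length - 1 by omega, hP.getD_pred_length]
      rfl
    obtain ⟨M, hMWF, hM⟩ := hD.exists_refStruct hDs hF
    exact ⟨M.assign, isModel_RREF_of_isModel_REF (M.isModel_assign_REF hs hMWF hM) fun _ => rfl⟩
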